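/- arXiv:2309.07593 — 2 statements merged into one kernel-verified Lean document; each statement's English description precedes it below -/
import Mathlib

section
/- Let μ(x) = x·w and μ̂(x) = x·ŵ be linear functions on ℝᵖ, let y_i = μ(x_i) + ε_i, and suppose w^j = 0 (the j-th coordinate is a null feature). Then the permutation importance estimator m̂^j = (1/n) Σ_i [(y_i − μ̂(x_i^{(j)}))² − (y_i − μ̂(x_i))²], where x_i^{(j)} replaces the j-th column of X by a permuted copy, equals (2ŵ^j/n) ⟨x^j − (x^j)^perm, X^{−j}(w^{−j} − ŵ^{−j}) + ε⟩. -/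
open Finset

/-- Permutation importance of a null feature in the linear model:
exact algebraic expression (Eq. (2) → Eq. (3) of the paper).
Here `w` is the true coefficient vector and `wh` the estimated one (ŵ). -/
theorem perm_importance_linear_identity
    (n p : ℕ) (X : Fin n → Fin p → ℝ) (w wh : Fin p → ℝ) (ε : Fin n → ℝ)
    (j : Fin p) (σ : Equiv.Perm (Fin n))
    (hwj : w j = 0)
    (y : Fin n → ℝ) (hy : ∀ i, y i = (∑ k, X i k * w k) + ε i)
    (Xperm : Fin n → Fin p → ℝ)
    (hXperm : ∀ i k, Xperm i k = if k = j then X (σ i) j else X i k) :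
    (1 / (n : ℝ)) * ∑ i, ((y i - ∑ k, Xperm i k * wh k) ^ 2
        - (y i - ∑ k, X i k * wh k) ^ 2)
      = (2 * wh j / (n : ℝ)) * ∑ i, (X i j - X (σ i) j) *
          ((∑ k ∈ Finset.univ.erase j, X i k * (w k - wh k)) + ε i) := by
  have key : ∀ i, (y i - ∑ k, Xperm i k * wh k) ^ 2
        - (y i - ∑ k, X i k * wh k) ^ 2
      = 2 * wh j * ((X i j - X (σ i) j) *
          ((∑ k ∈ Finset.univ.erase j, X i k * (w k - wh k)) + ε i))
        + (wh j) ^ 2 * ((X (σ i) j) ^ 2 - (X i j) ^ 2) := by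
    intro i
    have h1 : ∑ k, Xperm i k * wh k
        = (∑ k ∈ Finset.univ.erase j, X i k * wh k) + X (σ i) j * wh j := by
      rw [← Finset.sum_erase_add _ _ (Finset.mem_univ j)]
      congr 1
      · refine Finset.sum_congr rfl fun k hk => ?_
        rw [hXperm]
        simp [Finset.ne_of_mem_erase hk]
      · rw [hXperm]; simp
    have h2 : ∑ k, X i k * wh k
        = (∑ k ∈ Finset.univ.erase j, X i k * wh k) + X i j * wh j := by
      rw [← Finset.sum_erase_add _ _ (Finset.mem_univ j)]
    have h3 : ∑ k, X i k * w k = ∑ k ∈ Finset.univ.erase j, X i k * w k := by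
      rw [← Finset.sum_erase_add _ _ (Finset.mem_univ j), hwj, mul_zero, add_zero]
    have h4 : ∑ k ∈ Finset.univ.erase j, X i k * (w k - wh k)
        = (∑ k ∈ Finset.univ.erase j, X i k * w k)
          - ∑ k ∈ Finset.univ.erase j, X i k * wh k := by
      rw [← Finset.sum_sub_distrib]
      exact Finset.sum_congr rfl fun k _ => by ring
    rw [hy, h1, h2, h3, h4]
    ring
  rw [Finset.sum_congr rfl fun i _ => key i, Finset.sum_add_distrib]
  have hz : ∑ i, (wh j) ^ 2 * ((X (σ i) j) ^ 2 - (X i j) ^ 2) = 0 := by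
    rw [← Finset.mul_sum, Finset.sum_sub_distrib]
    have := Equiv.sum_comp σ (fun i => (X i j) ^ 2)
    simp [this]
  rw [hz, add_zero, ← Finset.mul_sum]
  ring
end

section
/- Let μ, μ̂ : ℝᵖ → ℝ be linear: μ(x) = x·w, μ̂(x) = x·ŵ, with w^j = 0. Let (x_i, ε_i) be i.i.d., x_i mean-zero with finite fourth moments, ε_i mean-zero independent of x_i, and let x̃_i^{(j)} replace x_i^j by x̂_i^j + ε̃_i^j where x̂_i^j = E[x^j | x_i^{−j}] and the residuals (x_i^j − x̂_i^j) are randomly permuted. Assume E[x^j | x^{−j}] = x^{−j}·u is linear. Then the CPI estimator m̂^j_{CPI} = (1/n) Σ_i [(y_i − μ̂(x̃_i^{(j)}))² − (y_i − μ̂(x_i))²], with y_i = μ(x_i) + ε_i, converges in probability to 0 as n → ∞. -/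
/-!
Write `R = x^j - x^{-j}·u` for the residual of the null feature and `e = y - μ̂(x)`.
Replacing `x_i^j` by `x̂_i^j + R_{π(i)}` moves `μ̂` by `ŵ_j (R_{π(i)} - R_i)`, so after summing over
the permutation the quadratic terms in `R` cancel and
`n · m̂ = 2 ŵ_j (∑ᵢ Gᵢ Rᵢ - ∑ᵢ Gᵢ R_{π(i)})` with `G = e + ŵ_j R`.
Since `w^j = 0`, `G` depends on `(x^{-j}, ε)` only, so `E[G] = 0` and `E[G R] = 0` (linear
conditional mean, independent noise). For each fixed permutation `s` the terms `Gᵢ R_{s(i)}` are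
then pairwise orthogonal, the bracket has second moment `O(n)`, and Chebyshev's inequality together
with the independence of `π` from the sample gives `P(|m̂| ≥ δ) = O(1/n)`.
-/

open MeasureTheory ProbabilityTheory Filter Finset Topology
open scoped ENNReal

section Algebra

variable {ι : Type*} [Fintype ι]

lemma sum_ite_mul_eq_add [DecidableEq ι] (X c : ι → ℝ) (j : ι) (a : ℝ) :
    ∑ k, (if k = j then a else X k) * c k = ∑ k, X k * c k + (a - X j) * c j := by
  have h : ∀ k, (if k = j then a else X k) * c k
      = X k * c k + if k = j then (a - X j) * c j else 0 := by
    intro k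
    split_ifs with hk
    · subst hk; ring
    · simp
  simp [h, sum_add_distrib]

lemma sum_sq_sub_perm_sub_sq (σ : Equiv.Perm ι) (e R : ι → ℝ) (c : ℝ) :
    ∑ i, ((e i - c * (R (σ i) - R i)) ^ 2 - e i ^ 2)
      = 2 * c * (∑ i, (e i + c * R i) * R i - ∑ i, (e i + c * R i) * R (σ i)) := by
  have hexp : ∀ i, (e i - c * (R (σ i) - R i)) ^ 2 - e i ^ 2
      = 2 * c * ((e i + c * R i) * R i - (e i + c * R i) * R (σ i))
        + c ^ 2 * (R (σ i) ^ 2 - R i ^ 2) := fun i => by ring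
  have hperm : ∑ i, R (σ i) ^ 2 = ∑ i, R i ^ 2 := Equiv.sum_comp σ fun i => R i ^ 2
  simp only [hexp, sum_add_distrib, ← mul_sum, sum_sub_distrib, hperm, sub_self, mul_zero,
    add_zero]

end Algebra

lemma integral_mul_sub_eq_zero_of_condExp_ae_eq {Ω : Type*} {m mΩ : MeasurableSpace Ω}
    {μ : Measure Ω} [IsFiniteMeasure μ] (hm : m ≤ mΩ) {f g φ : Ω → ℝ}
    (hf : StronglyMeasurable[m] f) (hφ : StronglyMeasurable[m] φ)
    (hg : Integrable g μ) (hφi : Integrable φ μ) (hfg : Integrable (f * (g - φ)) μ)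
    (hcond : μ[g | m] =ᵐ[μ] φ) :
    ∫ ω, f ω * (g ω - φ ω) ∂μ = 0 := by
  have hres : μ[g - φ | m] =ᵐ[μ] 0 := by
    filter_upwards [condExp_sub hg hφi m, hcond] with ω h1 h2
    simp [h1, h2, condExp_of_stronglyMeasurable hm hφ hφi]
  have hpull : μ[f * (g - φ) | m] =ᵐ[μ] 0 := by
    filter_upwards [condExp_mul_of_stronglyMeasurable_left hf hfg (hg.sub hφi), hres]
      with ω h1 h2
    simp [h1, h2]
  calc ∫ ω, f ω * (g ω - φ ω) ∂μ = ∫ ω, μ[f * (g - φ) | m] ω ∂μ := (integral_condExp hm).symm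
    _ = 0 := by simp [integral_congr_ae hpull]

section Probability

variable {Ω : Type*} [MeasurableSpace Ω] {μ : Measure Ω}

lemma ProbabilityTheory.IndepFun.memLp_two_mul {X Y : Ω → ℝ} (hXY : IndepFun X Y μ)
    (hX : MemLp X 2 μ) (hY : MemLp Y 2 μ) : MemLp (X * Y) 2 μ := by
  refine (memLp_two_iff_integrable_sq (hX.1.mul hY.1)).2 ?_
  have hsq := (hXY.comp (measurable_id.pow_const 2) (measurable_id.pow_const 2)).integrable_mul
    ((memLp_two_iff_integrable_sq hX.1).1 hX) ((memLp_two_iff_integrable_sq hY.1).1 hY)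
  exact hsq.congr (ae_of_all _ fun ω => by simp [mul_pow])

lemma ProbabilityTheory.iIndepFun.indepFun_prodMk₃ {ι β : Type*} [MeasurableSpace β]
    {W : ι → Ω → β} (hind : iIndepFun W μ) (hW : ∀ i, Measurable (W i))
    {a b c d : ι} (hab : a ≠ b) (hac : a ≠ c) (had : a ≠ d) :
    IndepFun (W a) (fun ω => (W b ω, W c ω, W d ω)) μ := by
  classical
  have hdisj : Disjoint ({a} : Finset ι) {b, c, d} := by simp [hab, hac, had]
  have ha : a ∈ ({a} : Finset ι) := mem_singleton_self a
  have hb : b ∈ ({b, c, d} : Finset ι) := by simp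
  have hc : c ∈ ({b, c, d} : Finset ι) := by simp
  have hd : d ∈ ({b, c, d} : Finset ι) := by simp
  exact (hind.indepFun_finset _ _ hdisj hW).comp
    (φ := fun v => v ⟨a, ha⟩) (ψ := fun v => (v ⟨b, hb⟩, v ⟨c, hc⟩, v ⟨d, hd⟩))
    (measurable_pi_apply (X := fun _ => β) _) (by fun_prop)

lemma integral_sq_sum_eq_of_orthogonal {ι : Type*} [Fintype ι] {Z : ι → Ω → ℝ}
    (hZ : ∀ i, MemLp (Z i) 2 μ) (horth : Pairwise fun i i' => ∫ ω, Z i ω * Z i' ω ∂μ = 0) :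
    ∫ ω, (∑ i, Z i ω) ^ 2 ∂μ = ∑ i, ∫ ω, Z i ω ^ 2 ∂μ := by
  have hint : ∀ i i', Integrable (fun ω => Z i ω * Z i' ω) μ := fun i i' =>
    (hZ i).integrable_mul (hZ i')
  simp_rw [sq, sum_mul_sum]
  rw [integral_finsetSum _ fun i _ => integrable_finsetSum _ fun i' _ => hint i i']
  refine sum_congr rfl fun i _ => ?_
  rw [integral_finsetSum _ fun i' _ => hint i i',
    sum_eq_single i (fun i' _ h => horth h.symm) (by simp)]

lemma meas_abs_ge_le_integral_sq_div_sq [IsFiniteMeasure μ] {f : Ω → ℝ}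
    (hf : MemLp f 2 μ) {δ : ℝ} (hδ : 0 < δ) :
    μ {ω | δ ≤ |f ω|} ≤ ENNReal.ofReal ((∫ ω, f ω ^ 2 ∂μ) / δ ^ 2) := by
  have hset : {ω | δ ≤ |f ω|} = {ω | δ ^ 2 ≤ f ω ^ 2} := by
    ext ω
    change δ ≤ |f ω| ↔ δ ^ 2 ≤ f ω ^ 2
    rw [← sq_abs (f ω), pow_le_pow_iff_left₀ hδ.le (abs_nonneg _) two_ne_zero]
  have hmarkov := mul_meas_ge_le_integral_of_nonneg (ae_of_all _ fun ω => sq_nonneg (f ω))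
    ((memLp_two_iff_integrable_sq hf.1).1 hf) (δ ^ 2)
  rw [hset, ← ofReal_measureReal, ENNReal.ofReal_le_ofReal_iff (by positivity),
    le_div_iff₀ (by positivity), mul_comm]
  exact hmarkov

/-- Independence from the discrete `σ`-algebra `⊤` does not make `π` measurable, so its fibres
are only outer-measured by `μ`. -/
lemma measure_mem_preimage_le_of_indepFun {S E : Type*} [Fintype S] [MeasurableSpace E]
    {π : Ω → S} {Y : Ω → E} (hind : @IndepFun Ω S E _ ⊤ _ π Y μ)
    (hπ : ∑ s, μ (π ⁻¹' {s}) ≤ 1) {A : S → Set E} (hA : ∀ s, MeasurableSet (A s)) {b : ℝ≥0∞}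
    (hb : ∀ s, μ (Y ⁻¹' A s) ≤ b) :
    μ {ω | Y ω ∈ A (π ω)} ≤ b := by
  have hcover : {ω | Y ω ∈ A (π ω)} ⊆ ⋃ s, π ⁻¹' {s} ∩ Y ⁻¹' A s := fun ω hω =>
    Set.mem_iUnion.2 ⟨π ω, rfl, hω⟩
  calc μ {ω | Y ω ∈ A (π ω)} ≤ ∑ s, μ (π ⁻¹' {s} ∩ Y ⁻¹' A s) :=
        (measure_mono hcover).trans (measure_iUnion_fintype_le _ _)
    _ = ∑ s, μ (π ⁻¹' {s}) * μ (Y ⁻¹' A s) := sum_congr rfl fun s _ =>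
        hind.measure_inter_preimage_eq_mul _ _ MeasurableSpace.measurableSet_top (hA s)
    _ ≤ ∑ s, μ (π ⁻¹' {s}) * b := by gcongr with s; exact hb s
    _ ≤ b := by rw [← sum_mul]; exact mul_le_of_le_one_left zero_le hπ

lemma sum_measure_preimage_singleton_eq_one {S : Type*} [Fintype S] [Nonempty S] {π : Ω → S}
    (h : ∀ s, μ {ω | π ω = s} = 1 / (Fintype.card S : ℝ≥0∞)) :
    ∑ s, μ (π ⁻¹' {s}) = 1 := by
  simp_rw [Set.preimage, Set.mem_singleton_iff, h]
  rw [sum_const, card_univ, nsmul_eq_mul, one_div,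
    ENNReal.mul_inv_cancel (by simp [Fintype.card_ne_zero]) (ENNReal.natCast_ne_top _)]

lemma integral_sq_sub_le {f g : Ω → ℝ} (hf : MemLp f 2 μ) (hg : MemLp g 2 μ) :
    ∫ ω, (f ω - g ω) ^ 2 ∂μ ≤ 2 * ∫ ω, f ω ^ 2 ∂μ + 2 * ∫ ω, g ω ^ 2 ∂μ := by
  have hf2 := (memLp_two_iff_integrable_sq hf.1).1 hf
  have hg2 := (memLp_two_iff_integrable_sq hg.1).1 hg
  rw [← integral_const_mul, ← integral_const_mul,
    ← integral_add (hf2.const_mul 2) (hg2.const_mul 2)]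
  refine integral_mono ((memLp_two_iff_integrable_sq (hf.1.sub hg.1)).1 (hf.sub hg))
    ((hf2.const_mul 2).add (hg2.const_mul 2)) fun ω => ?_
  nlinarith [sq_nonneg (f ω + g ω)]

lemma tendstoInMeasure_zero_of_measure_le_div {f : ℕ → Ω → ℝ} {K : ℝ → ℝ}
    (h : ∀ δ, 0 < δ → ∀ n : ℕ, μ {ω | δ ≤ |f n ω|} ≤ ENNReal.ofReal (K δ / n)) :
    TendstoInMeasure μ f atTop 0 := by
  rw [tendstoInMeasure_iff_dist]
  intro δ hδ
  have hK : Tendsto (fun n : ℕ => ENNReal.ofReal (K δ / n)) atTop (𝓝 0) := by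
    simpa using ENNReal.tendsto_ofReal (tendsto_const_div_atTop_nhds_zero_nat (K δ))
  refine tendsto_of_tendsto_of_tendsto_of_le_of_le tendsto_const_nhds hK (fun n => zero_le)
    fun n => ?_
  simpa [Real.dist_eq] using h δ hδ n

end Probability

section Score

variable {ι : Type*} [Fintype ι]

def cpiResidual (u : ι → ℝ) (j : ι) (v : ι → ℝ) : ℝ := v j - ∑ l, v l * u l

/-- The prediction error of `μ̂` at `x` with `x^j` replaced by its conditional mean
`x̂^j = x^{-j}·u`; when `w^j = 0` it depends on `x` only through `x^{-j}`. -/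
def cpiScore (w wh u : ι → ℝ) (j : ι) (b : (ι → ℝ) × ℝ) : ℝ :=
  ∑ k, b.1 k * w k + b.2 - ∑ k, b.1 k * wh k + wh j * cpiResidual u j b.1

lemma measurable_cpiResidual (u : ι → ℝ) (j : ι) : Measurable (cpiResidual u j) := by
  unfold cpiResidual; fun_prop

lemma measurable_cpiScore (w wh u : ι → ℝ) (j : ι) : Measurable (cpiScore w wh u j) := by
  unfold cpiScore cpiResidual; fun_prop

lemma cpiScore_eq_sum_mul_add {w wh u : ι → ℝ} {j : ι} (hwj : w j = 0) (huj : u j = 0) :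
    ∃ d : ι → ℝ, d j = 0 ∧ ∀ b, cpiScore w wh u j b = ∑ k, b.1 k * d k + b.2 := by
  classical
  refine ⟨fun k => w k - wh k - u k * wh j + if k = j then wh j else 0, by simp [hwj, huj],
    fun b => ?_⟩
  simp only [cpiScore, cpiResidual, mul_add, mul_sub, mul_ite, mul_zero, sum_add_distrib,
    sum_sub_distrib, sum_ite_eq', mem_univ, if_true, ← mul_assoc, ← sum_mul]
  ring

variable {Ω : Type*} [MeasurableSpace Ω] {μ : Measure Ω} {X : Ω → ι → ℝ} {e : Ω → ℝ}
  {w wh u : ι → ℝ} {j : ι}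

omit [MeasurableSpace Ω] in
lemma stronglyMeasurable_comap_sum_mul (X : Ω → ι → ℝ) {c : ι → ℝ} (hc : c j = 0) :
    StronglyMeasurable[MeasurableSpace.comap (fun ω => fun k : {k : ι // k ≠ j} => X ω k)
      inferInstance] fun ω => ∑ k, X ω k * c k := by
  classical
  have hfac : (fun ω => ∑ k, X ω k * c k)
      = (fun v : {k : ι // k ≠ j} → ℝ => ∑ k, v k * c k) ∘
        (fun ω => fun k : {k : ι // k ≠ j} => X ω k) := by
    ext ω; simp [Fintype.sum_eq_add_sum_subtype_ne _ j, hc]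
  rw [hfac]
  exact (Measurable.comp (by fun_prop) (comap_measurable _)).stronglyMeasurable

lemma memLp_sum_mul {p : ℝ≥0∞} (hX : ∀ k, MemLp (fun ω => X ω k) p μ) (c : ι → ℝ) :
    MemLp (fun ω => ∑ k, X ω k * c k) p μ :=
  memLp_finsetSum _ fun k _ => (hX k).mul_const (c k)

lemma memLp_cpiResidual {p : ℝ≥0∞} (hX : ∀ k, MemLp (fun ω => X ω k) p μ) (u : ι → ℝ) (j : ι) :
    MemLp (fun ω => cpiResidual u j (X ω)) p μ :=
  (hX j).sub (memLp_sum_mul hX u)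

lemma memLp_cpiScore {p : ℝ≥0∞} (hwj : w j = 0) (huj : u j = 0)
    (hX : ∀ k, MemLp (fun ω => X ω k) p μ) (he : MemLp e p μ) :
    MemLp (fun ω => cpiScore w wh u j (X ω, e ω)) p μ := by
  obtain ⟨d, -, hd⟩ := cpiScore_eq_sum_mul_add (wh := wh) hwj huj
  simp only [hd]
  exact (memLp_sum_mul hX d).add he

lemma integral_cpiScore_eq_zero (hwj : w j = 0) (huj : u j = 0)
    (hX : ∀ k, Integrable (fun ω => X ω k) μ) (hXmean : ∀ k, μ[fun ω => X ω k] = 0)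
    (he : Integrable e μ) (hemean : μ[e] = 0) :
    ∫ ω, cpiScore w wh u j (X ω, e ω) ∂μ = 0 := by
  obtain ⟨d, -, hd⟩ := cpiScore_eq_sum_mul_add (wh := wh) hwj huj
  simp only [hd]
  rw [integral_add (integrable_finsetSum _ fun k _ => (hX k).mul_const _) he,
    integral_finsetSum _ fun k _ => (hX k).mul_const _]
  simp [integral_mul_const, hXmean, hemean]

variable [IsFiniteMeasure μ]

lemma memLp_cpiScore_mul_cpiResidual (hwj : w j = 0) (huj : u j = 0)
    (hX : ∀ k, MemLp (fun ω => X ω k) 4 μ) (he : MemLp e 2 μ) (hXe : IndepFun X e μ) :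
    MemLp (fun ω => cpiScore w wh u j (X ω, e ω) * cpiResidual u j (X ω)) 2 μ := by
  obtain ⟨d, -, hd⟩ := cpiScore_eq_sum_mul_add (wh := wh) hwj huj
  have : ENNReal.HolderTriple 4 4 2 :=
    ⟨by rw [← two_mul, show (4 : ℝ≥0∞) = 2 * 2 by norm_num, ENNReal.mul_inv (by simp) (by simp),
      ← mul_assoc, ENNReal.mul_inv_cancel two_ne_zero ENNReal.ofNat_ne_top, one_mul]⟩
  have hlin : MemLp (fun ω => (∑ k, X ω k * d k) * cpiResidual u j (X ω)) 2 μ :=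
    (memLp_cpiResidual hX u j).mul' (memLp_sum_mul hX d)
  have hnoise : MemLp (fun ω => e ω * cpiResidual u j (X ω)) 2 μ :=
    (hXe.symm.comp measurable_id (measurable_cpiResidual u j)).memLp_two_mul he
      ((memLp_cpiResidual hX u j).mono_exponent (by norm_num))
  simp only [hd, add_mul]
  exact hlin.add hnoise

lemma integral_cpiScore_mul_cpiResidual_eq_zero (hwj : w j = 0) (huj : u j = 0)
    (hXm : Measurable X) (hX : ∀ k, MemLp (fun ω => X ω k) 2 μ)
    (he : MemLp e 2 μ) (hemean : μ[e] = 0) (hXe : IndepFun X e μ)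
    (hcond : μ[(fun ω => X ω j) |
        MeasurableSpace.comap (fun ω => fun k : {k : ι // k ≠ j} => X ω k) inferInstance]
      =ᵐ[μ] fun ω => ∑ k, X ω k * u k) :
    ∫ ω, cpiScore w wh u j (X ω, e ω) * cpiResidual u j (X ω) ∂μ = 0 := by
  obtain ⟨d, hdj, hd⟩ := cpiScore_eq_sum_mul_add (wh := wh) hwj huj
  have hm : MeasurableSpace.comap (fun ω => fun k : {k : ι // k ≠ j} => X ω k) inferInstance
      ≤ ‹MeasurableSpace Ω› :=
    Measurable.comap_le (by fun_prop)
  have hXi : ∀ k, Integrable (fun ω => X ω k) μ := fun k => (hX k).integrable one_le_two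
  have hR : MemLp (fun ω => cpiResidual u j (X ω)) 2 μ := memLp_cpiResidual hX u j
  have hlin_int : Integrable (fun ω => (∑ k, X ω k * d k) * cpiResidual u j (X ω)) μ :=
    (memLp_sum_mul hX d).integrable_mul hR
  have hnoise_int : Integrable (fun ω => e ω * cpiResidual u j (X ω)) μ := he.integrable_mul hR
  have hlin : ∫ ω, (∑ k, X ω k * d k) * cpiResidual u j (X ω) ∂μ = 0 :=
    integral_mul_sub_eq_zero_of_condExp_ae_eq hm (stronglyMeasurable_comap_sum_mul X hdj)
      (stronglyMeasurable_comap_sum_mul X huj) (hXi j)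
      (integrable_finsetSum _ fun k _ => (hXi k).mul_const _) hlin_int hcond
  have hnoise : ∫ ω, e ω * cpiResidual u j (X ω) ∂μ = 0 :=
    calc ∫ ω, e ω * cpiResidual u j (X ω) ∂μ = μ[e] * ∫ ω, cpiResidual u j (X ω) ∂μ :=
          (hXe.symm.comp measurable_id (measurable_cpiResidual u j)
            ).integral_fun_mul_eq_mul_integral he.1 hR.1
      _ = 0 := by rw [hemean, zero_mul]
  simp only [hd, add_mul]
  rw [integral_add hlin_int hnoise_int, hlin, hnoise, add_zero]

end Score

section IidSample

variable {Ω ι β : Type*} [MeasurableSpace Ω] {μ : Measure Ω} [MeasurableSpace β]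
  {W : ι → Ω → β} {ξ : Ω → β} {G R : β → ℝ}

lemma integral_comp_mul_comp_mul_eq_zero
    (hW : ∀ i, Measurable (W i)) (hind : iIndepFun W μ) (hident : ∀ i, IdentDistrib (W i) ξ μ μ)
    (hG : Measurable G) (hR : Measurable R)
    (hG0 : ∫ ω, G (ξ ω) ∂μ = 0) (hGR0 : ∫ ω, G (ξ ω) * R (ξ ω) ∂μ = 0)
    {a c : ι} (hac : a ≠ c) (b d : ι) :
    ∫ ω, G (W a ω) * R (W b ω) * (G (W c ω) * R (W d ω)) ∂μ = 0 := by
  have hGi : ∀ i, ∫ ω, G (W i ω) ∂μ = 0 := fun i => ((hident i).comp hG).integral_eq.trans hG0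
  have hGRi : ∀ i, ∫ ω, G (W i ω) * R (W i ω) ∂μ = 0 := fun i =>
    ((hident i).comp (hG.mul hR)).integral_eq.trans hGR0
  have hlone : ∀ {a b c d : ι}, a ≠ b → a ≠ c → a ≠ d →
      ∫ ω, G (W a ω) * (R (W b ω) * (G (W c ω) * R (W d ω))) ∂μ = 0 := by
    intro a b c d hab hac had
    rw [(hind.indepFun_prodMk₃ hW hab hac had).integral_fun_comp_mul_comp (hW a).aemeasurable
      (by fun_prop) hG.aestronglyMeasurable
      (g := fun v : β × β × β => R v.1 * (G v.2.1 * R v.2.2)) (by fun_prop), hGi, zero_mul]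
  have hpair : ∀ {a c : ι}, a ≠ c →
      ∫ ω, G (W a ω) * R (W a ω) * (G (W c ω) * R (W c ω)) ∂μ = 0 := by
    intro a c hac
    rw [(hind.indepFun hac).integral_fun_comp_mul_comp (hW a).aemeasurable (hW c).aemeasurable
      (f := fun v => G v * R v) (g := fun v => G v * R v) (by fun_prop) (by fun_prop), hGRi,
      zero_mul]
  by_cases hA : a ≠ b ∧ a ≠ d
  · simpa only [mul_assoc] using hlone hA.1 hac hA.2
  by_cases hC : c ≠ b ∧ c ≠ d
  · simpa only [mul_comm, mul_left_comm, mul_assoc] using hlone hC.1 hac.symm hC.2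
  -- otherwise `{a, c} = {b, d}`, and the integrand is a product of two independent copies of `G R`
  have : (a = b ∧ c = d) ∨ (a = d ∧ c = b) := by grind
  rcases this with ⟨rfl, rfl⟩ | ⟨rfl, rfl⟩
  · exact hpair hac
  · simpa only [mul_comm, mul_left_comm, mul_assoc] using hpair hac

lemma memLp_comp_mul_comp (hind : iIndepFun W μ)
    (hident : ∀ i, IdentDistrib (W i) ξ μ μ) (hG : Measurable G) (hR : Measurable R)
    (hG2 : MemLp (fun ω => G (ξ ω)) 2 μ) (hR2 : MemLp (fun ω => R (ξ ω)) 2 μ)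
    (hGR2 : MemLp (fun ω => G (ξ ω) * R (ξ ω)) 2 μ) (i k : ι) :
    MemLp (fun ω => G (W i ω) * R (W k ω)) 2 μ := by
  rcases eq_or_ne i k with rfl | hik
  · exact ((hident i).comp (hG.mul hR)).memLp_iff.2 hGR2
  · exact IndepFun.memLp_two_mul ((hind.indepFun hik).comp hG hR)
      (((hident i).comp hG).memLp_iff.2 hG2) (((hident k).comp hR).memLp_iff.2 hR2)

lemma integral_comp_mul_comp_sq_le (hW : ∀ i, Measurable (W i)) (hind : iIndepFun W μ)
    (hident : ∀ i, IdentDistrib (W i) ξ μ μ) (hG : Measurable G) (hR : Measurable R) (i k : ι) :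
    ∫ ω, (G (W i ω) * R (W k ω)) ^ 2 ∂μ ≤
      ∫ ω, (G (ξ ω) * R (ξ ω)) ^ 2 ∂μ + (∫ ω, G (ξ ω) ^ 2 ∂μ) * ∫ ω, R (ξ ω) ^ 2 ∂μ := by
  have hGRξ : 0 ≤ ∫ ω, (G (ξ ω) * R (ξ ω)) ^ 2 ∂μ := integral_nonneg fun ω => sq_nonneg _
  have hGξ : 0 ≤ ∫ ω, G (ξ ω) ^ 2 ∂μ := integral_nonneg fun ω => sq_nonneg _
  have hRξ : 0 ≤ ∫ ω, R (ξ ω) ^ 2 ∂μ := integral_nonneg fun ω => sq_nonneg _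
  rcases eq_or_ne i k with rfl | hik
  · have hsame : ∫ ω, (G (W i ω) * R (W i ω)) ^ 2 ∂μ = ∫ ω, (G (ξ ω) * R (ξ ω)) ^ 2 ∂μ :=
      ((hident i).comp ((hG.mul hR).pow_const 2)).integral_eq
    rw [hsame]
    exact le_add_of_nonneg_right (mul_nonneg hGξ hRξ)
  · have hsplit : ∫ ω, (G (W i ω) * R (W k ω)) ^ 2 ∂μ
        = (∫ ω, G (W i ω) ^ 2 ∂μ) * ∫ ω, R (W k ω) ^ 2 ∂μ := by
      simp_rw [mul_pow]
      exact ((hind.indepFun hik).comp (hG.pow_const 2) (hR.pow_const 2)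
        ).integral_fun_mul_eq_mul_integral ((hG.pow_const 2).comp (hW i)).aestronglyMeasurable
          ((hR.pow_const 2).comp (hW k)).aestronglyMeasurable
    have hGi : ∫ ω, G (W i ω) ^ 2 ∂μ = ∫ ω, G (ξ ω) ^ 2 ∂μ :=
      ((hident i).comp (hG.pow_const 2)).integral_eq
    have hRk : ∫ ω, R (W k ω) ^ 2 ∂μ = ∫ ω, R (ξ ω) ^ 2 ∂μ :=
      ((hident k).comp (hR.pow_const 2)).integral_eq
    rw [hsplit, hGi, hRk]
    exact le_add_of_nonneg_left hGRξ

lemma integral_sq_sum_comp_mul_comp_le [Fintype ι] (hW : ∀ i, Measurable (W i))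
    (hind : iIndepFun W μ) (hident : ∀ i, IdentDistrib (W i) ξ μ μ)
    (hG : Measurable G) (hR : Measurable R)
    (hG0 : ∫ ω, G (ξ ω) ∂μ = 0) (hGR0 : ∫ ω, G (ξ ω) * R (ξ ω) ∂μ = 0)
    (hG2 : MemLp (fun ω => G (ξ ω)) 2 μ) (hR2 : MemLp (fun ω => R (ξ ω)) 2 μ)
    (hGR2 : MemLp (fun ω => G (ξ ω) * R (ξ ω)) 2 μ) (s : ι → ι) :
    ∫ ω, (∑ i, G (W i ω) * R (W (s i) ω)) ^ 2 ∂μ ≤ Fintype.card ι *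
      (∫ ω, (G (ξ ω) * R (ξ ω)) ^ 2 ∂μ + (∫ ω, G (ξ ω) ^ 2 ∂μ) * ∫ ω, R (ξ ω) ^ 2 ∂μ) := by
  rw [integral_sq_sum_eq_of_orthogonal
    (fun i => memLp_comp_mul_comp hind hident hG hR hG2 hR2 hGR2 i (s i))
    fun i i' h => integral_comp_mul_comp_mul_eq_zero hW hind hident hG hR hG0 hGR0 h _ _]
  calc ∑ i, ∫ ω, (G (W i ω) * R (W (s i) ω)) ^ 2 ∂μ
      ≤ ∑ _i : ι, (∫ ω, (G (ξ ω) * R (ξ ω)) ^ 2 ∂μ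
          + (∫ ω, G (ξ ω) ^ 2 ∂μ) * ∫ ω, R (ξ ω) ^ 2 ∂μ) :=
        sum_le_sum fun i _ => integral_comp_mul_comp_sq_le hW hind hident hG hR i (s i)
    _ = _ := by rw [sum_const, card_univ, nsmul_eq_mul]

lemma meas_abs_mul_sum_sub_sum_perm_ge_le [IsFiniteMeasure μ] [Fintype ι] [DecidableEq ι]
    (hW : ∀ i, Measurable (W i)) (hind : iIndepFun W μ) (hident : ∀ i, IdentDistrib (W i) ξ μ μ)
    (hG : Measurable G) (hR : Measurable R)
    (hG0 : ∫ ω, G (ξ ω) ∂μ = 0) (hGR0 : ∫ ω, G (ξ ω) * R (ξ ω) ∂μ = 0)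
    (hG2 : MemLp (fun ω => G (ξ ω)) 2 μ) (hR2 : MemLp (fun ω => R (ξ ω)) 2 μ)
    (hGR2 : MemLp (fun ω => G (ξ ω) * R (ξ ω)) 2 μ) {π : Ω → Equiv.Perm ι}
    (hπind : @IndepFun Ω (Equiv.Perm ι) (ι → β) _ ⊤ _ π (fun ω i => W i ω) μ)
    (hπ : ∑ s, μ (π ⁻¹' {s}) ≤ 1) (c : ℝ) {δ : ℝ} (hδ : 0 < δ) :
    μ {ω | δ ≤ |c * (∑ i, G (W i ω) * R (W i ω) - ∑ i, G (W i ω) * R (W (π ω i) ω))|} ≤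
      ENNReal.ofReal (c ^ 2 * (4 * Fintype.card ι * (∫ ω, (G (ξ ω) * R (ξ ω)) ^ 2 ∂μ
        + (∫ ω, G (ξ ω) ^ 2 ∂μ) * ∫ ω, R (ξ ω) ^ 2 ∂μ)) / δ ^ 2) := by
  set C := ∫ ω, (G (ξ ω) * R (ξ ω)) ^ 2 ∂μ + (∫ ω, G (ξ ω) ^ 2 ∂μ) * ∫ ω, R (ξ ω) ^ 2 ∂μ
  have hT : ∀ s : ι → ι, MemLp (fun ω => ∑ i, G (W i ω) * R (W (s i) ω)) 2 μ := fun s =>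
    memLp_finsetSum _ fun i _ => memLp_comp_mul_comp hind hident hG hR hG2 hR2 hGR2 i (s i)
  have hT2 := integral_sq_sum_comp_mul_comp_le hW hind hident hG hR hG0 hGR0 hG2 hR2 hGR2
  have hD2 : ∀ s : Equiv.Perm ι, ∫ ω, (c * (∑ i, G (W i ω) * R (W i ω)
      - ∑ i, G (W i ω) * R (W (s i) ω))) ^ 2 ∂μ ≤ c ^ 2 * (4 * Fintype.card ι * C) := by
    intro s
    simp_rw [mul_pow]
    rw [integral_const_mul]
    have hid : ∫ ω, (∑ i, G (W i ω) * R (W i ω)) ^ 2 ∂μ ≤ Fintype.card ι * C := hT2 id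
    have hs : ∫ ω, (∑ i, G (W i ω) * R (W (s i) ω)) ^ 2 ∂μ ≤ Fintype.card ι * C := hT2 s
    have hsub : ∫ ω, (∑ i, G (W i ω) * R (W i ω) - ∑ i, G (W i ω) * R (W (s i) ω)) ^ 2 ∂μ
        ≤ 2 * ∫ ω, (∑ i, G (W i ω) * R (W i ω)) ^ 2 ∂μ
          + 2 * ∫ ω, (∑ i, G (W i ω) * R (W (s i) ω)) ^ 2 ∂μ :=
      integral_sq_sub_le (hT id) (hT s)
    gcongr
    linarith
  refine measure_mem_preimage_le_of_indepFun hπind hπ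
    (A := fun s => {v | δ ≤ |c * (∑ i, G (v i) * R (v i) - ∑ i, G (v i) * R (v (s i)))|})
    (fun s => measurableSet_le measurable_const (by fun_prop)) fun s => ?_
  exact (meas_abs_ge_le_integral_sq_div_sq (((hT id).sub (hT s)).const_mul c) hδ).trans
    (ENNReal.ofReal_le_ofReal (div_le_div_of_nonneg_right (hD2 s) (sq_nonneg δ)))

end IidSample

lemma cpi_estimator_eq {ι : Type*} [Fintype ι] [DecidableEq ι] (n : ℕ) (j : ι)
    (w wh u : ι → ℝ) (σ : Equiv.Perm (Fin n)) (X : Fin n → ι → ℝ) (e : Fin n → ℝ) :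
    (1 / (n : ℝ)) * ∑ i : Fin n,
      ((((∑ k, X i k * w k) + e i)
          - (∑ k, (if k = j then (∑ l, X i l * u l) + (X (σ i) j - ∑ l, X (σ i) l * u l)
              else X i k) * wh k)) ^ 2
        - (((∑ k, X i k * w k) + e i) - (∑ k, X i k * wh k)) ^ 2)
      = 2 * wh j / n * (∑ i, cpiScore w wh u j (X i, e i) * cpiResidual u j (X i)
          - ∑ i, cpiScore w wh u j (X i, e i) * cpiResidual u j (X (σ i))) := by
  set E : Fin n → ℝ := fun i => ∑ k, X i k * w k + e i - ∑ k, X i k * wh k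
  set R : Fin n → ℝ := fun i => cpiResidual u j (X i)
  calc _ = 1 / (n : ℝ) * ∑ i, ((E i - wh j * (R (σ i) - R i)) ^ 2 - E i ^ 2) := by
        congr 1
        refine sum_congr rfl fun i _ => ?_
        rw [sum_ite_mul_eq_add]
        simp only [E, R, cpiResidual]
        ring
    _ = _ := by
        rw [sum_sq_sub_perm_sub_sq]
        simp only [E, R, cpiScore]
        ring

/-- CPI estimator of a null feature `j` in a linear model converges in
probability to 0: the conditionally permuted feature replaces `x^j` by its
(linear) conditional mean `∑_{k≠j} x^k u_k` plus uniformly permuted residuals. -/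
theorem cpi_estimator_tendsto_zero
    {Ω : Type*} [MeasurableSpace Ω] (μ : Measure Ω) [IsProbabilityMeasure μ]
    (p : ℕ) (j : Fin p)
    (x : ℕ → Ω → (Fin p → ℝ)) (ε : ℕ → Ω → ℝ)
    (w wh u : Fin p → ℝ) (hwj : w j = 0) (huj : u j = 0)
    (hmeas : ∀ i, Measurable (fun ω => (x i ω, ε i ω)))
    (hindep : iIndepFun (fun i ω => (x i ω, ε i ω)) μ)
    (hident : ∀ i, IdentDistrib (fun ω => (x i ω, ε i ω)) (fun ω => (x 0 ω, ε 0 ω)) μ μ)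
    (hxmean : ∀ k, μ[fun ω => x 0 ω k] = 0)
    (hx4 : ∀ k, MemLp (fun ω => x 0 ω k) 4 μ)
    (hεmean : μ[ε 0] = 0) (hε2 : MemLp (ε 0) 2 μ)
    (hxε : IndepFun (x 0) (ε 0) μ)
    (hcond : μ[(fun ω => x 0 ω j) |
        MeasurableSpace.comap
          (fun ω => (fun k : {k : Fin p // k ≠ j} => x 0 ω (k : Fin p)))
          inferInstance]
      =ᵐ[μ] fun ω => ∑ k, x 0 ω k * u k)
    (π : (n : ℕ) → Ω → Equiv.Perm (Fin n))
    (hπunif : ∀ n (s : Equiv.Perm (Fin n)),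
      μ {ω | π n ω = s} = 1 / (n.factorial : ENNReal))
    (hπindep : ∀ n, @IndepFun Ω (Equiv.Perm (Fin n)) (Fin n → (Fin p → ℝ) × ℝ)
      _ ⊤ _ (π n) (fun ω (i : Fin n) => (x i ω, ε i ω)) μ) :
    TendstoInMeasure μ
      (fun (n : ℕ) ω =>
        (1 / (n : ℝ)) * ∑ i : Fin n,
          ((((∑ k, x (i : ℕ) ω k * w k) + ε (i : ℕ) ω)
              - (∑ k, (if k = j then
                    (∑ l, x (i : ℕ) ω l * u l)
                      + (x ((π n ω i : Fin n) : ℕ) ω j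
                          - ∑ l, x ((π n ω i : Fin n) : ℕ) ω l * u l)
                  else x (i : ℕ) ω k) * wh k)) ^ 2
            - (((∑ k, x (i : ℕ) ω k * w k) + ε (i : ℕ) ω)
                - (∑ k, x (i : ℕ) ω k * wh k)) ^ 2))
      atTop (fun _ => 0) := by
  have hx2 : ∀ k, MemLp (fun ω => x 0 ω k) 2 μ := fun k => (hx4 k).mono_exponent (by norm_num)
  have hG0 := integral_cpiScore_eq_zero (wh := wh) hwj huj
    (fun k => (hx2 k).integrable one_le_two) hxmean (hε2.integrable one_le_two) hεmean
  have hGR0 := integral_cpiScore_mul_cpiResidual_eq_zero (wh := wh) hwj huj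
    (measurable_fst.comp (hmeas 0)) hx2 hε2 hεmean hxε hcond
  have hπ : ∀ n, ∑ s, μ (π n ⁻¹' {s}) ≤ 1 := fun n => (sum_measure_preimage_singleton_eq_one
    fun s => by simpa [Fintype.card_perm] using hπunif n s).le
  set C := ∫ ω, (cpiScore w wh u j (x 0 ω, ε 0 ω) * cpiResidual u j (x 0 ω)) ^ 2 ∂μ
    + (∫ ω, cpiScore w wh u j (x 0 ω, ε 0 ω) ^ 2 ∂μ) * ∫ ω, cpiResidual u j (x 0 ω) ^ 2 ∂μ
  refine TendstoInMeasure.congr_left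
    (fun n => ae_of_all _ fun ω => (cpi_estimator_eq n j w wh u (π n ω) (fun i => x i ω)
      (fun i => ε i ω)).symm) ?_
  refine tendstoInMeasure_zero_of_measure_le_div (K := fun δ => 16 * wh j ^ 2 * C / δ ^ 2)
    fun δ hδ n => ?_
  refine (meas_abs_mul_sum_sub_sum_perm_ge_le (W := fun (i : Fin n) ω => (x i ω, ε i ω))
    (G := cpiScore w wh u j) (R := fun b => cpiResidual u j b.1)
    (fun i => hmeas i) (hindep.precomp Fin.val_injective) (fun i => hident i)
    (measurable_cpiScore w wh u j) ((measurable_cpiResidual u j).comp measurable_fst)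
    hG0 hGR0 (memLp_cpiScore hwj huj hx2 hε2) (memLp_cpiResidual hx2 u j)
    (memLp_cpiScore_mul_cpiResidual hwj huj hx4 hε2 hxε) (hπindep n) (hπ n) _ hδ).trans_eq ?_
  have hscale : ∀ C' : ℝ, (2 * wh j / n) ^ 2 * (4 * n * C') / δ ^ 2
      = 16 * wh j ^ 2 * C' / δ ^ 2 / n := by
    intro C'
    rcases n.eq_zero_or_pos with rfl | hn
    · simp
    · field_simp
      ring
  simpa only [Fintype.card_fin] using congrArg ENNReal.ofReal (hscale _)
end
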